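/- Let λ ∈ ℂ with |λ| = 1 and let Ψ^L, Ψ^R : ℤ → ℂ be an eigenvector of the 2-state diagonal quantum walk with one defect with eigenvalue λ, with α = Ψ^L(0), β = Ψ^R(0). If |b|²·(|α|² − |β|²) − 2·Re(conj(a)·b·conj(α)·β) = 0, then the measure μ(x) = |Ψ^L(x)|² + |Ψ^R(x)|² is uniform: μ(x) = |α|² + |β|² for all x ∈ ℤ. -/

import Mathlib

/-!
Every transfer coefficient away from the defect is unimodular, as is `λ`, so `|Ψ^L(x + 1)| = |Ψ^L(x)|`
except possibly at `x = -1`, and `|Ψ^R(x + 1)| = |Ψ^R(x)|` except possibly at `x = 0`.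
Expanding `|Ψ^L(-1)|² = |aα + bβ|²` shows that the hypothesis is exactly `|Ψ^L(-1)| = |α|`, and since
the defect coin is unitary, `|Ψ^L(-1)|² + |Ψ^R(1)|² = |α|² + |β|²`, whence also `|Ψ^R(1)| = |β|`.
Hence both `|Ψ^L|` and `|Ψ^R|` have period one on `ℤ`, i.e. they are constant.
-/

open Complex ComplexConjugate

theorem norm_eq_norm_of_mul_eq_mul {𝕜 : Type*} [NormedDivisionRing 𝕜] {l c u v : 𝕜}
    (hl : ‖l‖ = 1) (hc : ‖c‖ = 1) (h : l * u = c * v) : ‖u‖ = ‖v‖ := by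
  simpa [hl, hc] using congrArg norm h

theorem Complex.norm_mul_exp_neg_I_mul_ofReal {Δ : ℂ} (hΔ : ‖Δ‖ = 1) (σ : ℝ) :
    ‖Δ * exp (-(I * σ))‖ = 1 := by
  simp [hΔ, norm_exp]

theorem Complex.sq_norm_mul_add_mul (a b α β : ℂ) :
    ‖a * α + b * β‖ ^ 2 = ‖a‖ ^ 2 * ‖α‖ ^ 2 + ‖b‖ ^ 2 * ‖β‖ ^ 2 + 2 * (conj a * b * conj α * β).re := by
  simp only [Complex.sq_norm, normSq_apply, add_re, add_im, mul_re, mul_im, conj_re, conj_im]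
  ring

/-- The left side is `‖U (α, β)‖²` for the coin `U = [[a, b], [-Δ₀ b̄, Δ₀ ā]]`. -/
theorem Complex.sq_norm_add_sq_norm_coin {Δ₀ : ℂ} (hΔ₀ : ‖Δ₀‖ = 1) (a b α β : ℂ) :
    ‖a * α + b * β‖ ^ 2 + ‖-Δ₀ * conj b * α + Δ₀ * conj a * β‖ ^ 2
      = (‖a‖ ^ 2 + ‖b‖ ^ 2) * (‖α‖ ^ 2 + ‖β‖ ^ 2) := by
  rw [show -Δ₀ * conj b * α + Δ₀ * conj a * β = Δ₀ * (conj a * β - conj b * α) by ring,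
    norm_mul, hΔ₀, one_mul]
  simp only [Complex.sq_norm, normSq_apply, add_re, add_im, sub_re, sub_im, mul_re, mul_im, conj_re,
    conj_im]
  ring

theorem Function.Periodic.apply_eq_apply_zero {β : Type*} {f : ℤ → β} (hf : Function.Periodic f 1)
    (x : ℤ) : f x = f 0 := by
  simpa using hf.int_mul_eq x

/-- If |b|²(|α|² − |β|²) − 2 Re(conj(a) b conj(α) β) = 0, the stationary measure is uniform. -/
theorem two_state_diagonal_defect_uniform_condition
    (σp σm : ℝ) (Δp Δm Δ0 a b c d : ℂ)
    (hΔp : ‖Δp‖ = 1) (hΔm : ‖Δm‖ = 1) (hΔ0 : ‖Δ0‖ = 1)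
    (hab : ‖a‖ ^ 2 + ‖b‖ ^ 2 = 1)
    (hc : c = -Δ0 * (starRingEnd ℂ) b) (hd : d = Δ0 * (starRingEnd ℂ) a)
    (lam : ℂ) (hlam : ‖lam‖ = 1)
    (ΨL ΨR : ℤ → ℂ)
    (hL1 : ∀ x : ℤ, 0 ≤ x →
      lam * ΨL x = Complex.exp (Complex.I * (σp : ℂ)) * ΨL (x + 1))
    (hL2 : ∀ x : ℤ, x ≤ -2 →
      lam * ΨL x = Complex.exp (Complex.I * (σm : ℂ)) * ΨL (x + 1))
    (hL3 : lam * ΨL (-1) = a * ΨL 0 + b * ΨR 0)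
    (hR1 : ∀ x : ℤ, 2 ≤ x →
      lam * ΨR x = Δp * Complex.exp (-(Complex.I * (σp : ℂ))) * ΨR (x - 1))
    (hR2 : ∀ x : ℤ, x ≤ 0 →
      lam * ΨR x = Δm * Complex.exp (-(Complex.I * (σm : ℂ))) * ΨR (x - 1))
    (hR3 : lam * ΨR 1 = c * ΨL 0 + d * ΨR 0)
    (α β : ℂ) (hα : α = ΨL 0) (hβ : β = ΨR 0)
    (hcond : ‖b‖ ^ 2 * (‖α‖ ^ 2 - ‖β‖ ^ 2)
      - 2 * ((starRingEnd ℂ) a * b * (starRingEnd ℂ) α * β).re = 0)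
    (μ : ℤ → ℝ)
    (hμ : ∀ x : ℤ, μ x = ‖ΨL x‖ ^ 2 + ‖ΨR x‖ ^ 2) :
    ∀ x : ℤ, μ x = ‖α‖ ^ 2 + ‖β‖ ^ 2 := by
  subst hα hβ hc hd
  have hLnorm : ‖ΨL (-1)‖ = ‖a * ΨL 0 + b * ΨR 0‖ :=
    norm_eq_norm_of_mul_eq_mul hlam norm_one (hL3.trans (one_mul _).symm)
  have hRnorm : ‖ΨR 1‖ = ‖-Δ0 * conj b * ΨL 0 + Δ0 * conj a * ΨR 0‖ :=
    norm_eq_norm_of_mul_eq_mul hlam norm_one (hR3.trans (one_mul _).symm)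
  have hLdefect : ‖ΨL (-1)‖ ^ 2 = ‖ΨL 0‖ ^ 2 := by
    rw [hLnorm, sq_norm_mul_add_mul]
    linear_combination ‖ΨL 0‖ ^ 2 * hab - hcond
  have hRdefect : ‖ΨR 1‖ ^ 2 = ‖ΨR 0‖ ^ 2 := by
    have hcoin := sq_norm_add_sq_norm_coin hΔ0 a b (ΨL 0) (ΨR 0)
    rw [← hLnorm, ← hRnorm, hab] at hcoin
    linear_combination hcoin - hLdefect
  have hLper : Function.Periodic (fun x ↦ ‖ΨL x‖ ^ 2) 1 := by
    intro x
    dsimp only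
    rcases lt_trichotomy x (-1) with hx | rfl | hx
    · rw [norm_eq_norm_of_mul_eq_mul hlam (norm_exp_I_mul_ofReal σm) (hL2 x (by omega))]
    · simpa using hLdefect.symm
    · rw [norm_eq_norm_of_mul_eq_mul hlam (norm_exp_I_mul_ofReal σp) (hL1 x (by omega))]
  have hRper : Function.Periodic (fun x ↦ ‖ΨR x‖ ^ 2) 1 := by
    intro x
    rcases lt_trichotomy x 0 with hx | rfl | hx
    · simpa using norm_eq_norm_of_mul_eq_mul hlam (norm_mul_exp_neg_I_mul_ofReal hΔm σm)
        (hR2 (x + 1) (by omega))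
    · simpa using hRdefect
    · simpa using norm_eq_norm_of_mul_eq_mul hlam (norm_mul_exp_neg_I_mul_ofReal hΔp σp)
        (hR1 (x + 1) (by omega))
  intro x
  rw [hμ, hLper.apply_eq_apply_zero x, hRper.apply_eq_apply_zero x]
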